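/- arXiv:2301.10713 — 2 statements merged into one kernel-verified Lean document; each statement's English description precedes it below -/
import Mathlib

section
/- Consider on R^3 the quasilinear system u^i_t = V^i_j u^j_x + W^i with V = diag(0,0,0) except V^3_1 = −1 (i.e., V^1_j = V^2_j = 0, V^3_1 = −1, V^3_2 = V^3_3 = 0), W^1 = u^2, W^2 = u^3, W^3 = 6u^1 u^2, and the operator with degenerate leading coefficient g = diag(0, 0, −1), b^{ij}_k = 0, and ω^{12} = −1, ω^{23} = 6u^1, ω^{13} = 0 (ω skew-symmetric). Then all compatibility conditions of Theorem-type hold: (1) V^i_s g^{sj} = V^j_s g^{si}; (2) g^{is}(V^j_{s,k} − V^j_{k,s}) + b^{ij}_s V^s_k − b^{sj}_k V^i_s = 0; (3) g^{ij}_{,s} W^s − g^{js} W^i_{,s} − g^{is} W^j_{,s} − ω^{si} V^j_s − ω^{sj} V^i_s = 0; (4) W^i_{,s} ω^{sj} + W^j_{,s} ω^{is} + ω^{ji}_{,s} W^s = 0; (5) T^{ij}_k = 0, where T^{ij}_k = −g^{il} W^j_{,lk} + b^{ij}_{k,l} W^l + b^{ij}_l W^l_{,k} − b^{il}_k W^j_{,l}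 − b^{lj}_k W^i_{,l} − V^i_{k,s} ω^{sj} + ω^{is}(V^j_{s,k} − V^j_{k,s}) + ω^{ij}_{,s} V^s_k − ω^{sj}_{,k} V^i_s. -/
open scoped BigOperators

noncomputable def pd {n : ℕ} (s : Fin n) (f : (Fin n → ℝ) → ℝ) (u : Fin n → ℝ) : ℝ :=
  fderiv ℝ f u (Pi.single s 1)

/-- KdV as a first-order quasilinear system: homogeneous part `V` (only `V^3_1 = −1`). -/
noncomputable def VKdV (u : Fin 3 → ℝ) : Fin 3 → Fin 3 → ℝ :=
  fun i j => !![0, 0, 0; 0, 0, 0; -1, 0, 0] i j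

/-- Non-homogeneous part `W = (u^2, u^3, 6u^1u^2)`. -/
noncomputable def WKdV (u : Fin 3 → ℝ) : Fin 3 → ℝ :=
  ![u 1, u 2, 6 * u 0 * u 1]

/-- Degenerate leading coefficient `g = diag(0,0,−1)`. -/
noncomputable def gKdVdeg (u : Fin 3 → ℝ) : Fin 3 → Fin 3 → ℝ :=
  fun i j => !![0, 0, 0; 0, 0, 0; 0, 0, -1] i j

/-- The coefficients `b^{ij}_k = 0`. -/
noncomputable def bKdVdeg (u : Fin 3 → ℝ) : Fin 3 → Fin 3 → Fin 3 → ℝ :=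
  fun _ _ _ => 0

/-- Zeroth-order part: `ω^{12} = −1`, `ω^{13} = 0`, `ω^{23} = 6u^1`. -/
noncomputable def ωKdVdeg (u : Fin 3 → ℝ) : Fin 3 → Fin 3 → ℝ :=
  fun i j => !![0, -1, 0; 1, 0, 6*u 0; 0, -6*u 0, 0] i j

/-!
`V`, `g` and `b` are constant and `ω` depends on `u` only through `u^1`, while `W` is quadratic.
Since `g^{il}` vanishes unless `i = l = 3` and `∂_3 W` is constant, the only second derivatives of
`W` that occur are zero. Every remaining derivative is an explicit entry of the Jacobian of `W` or
of `∂ω`, and each condition becomes, entry by entry, a polynomial identity in `u`.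
-/

section pd

variable {n : ℕ} (s : Fin n) (u : Fin n → ℝ)

lemma pd_const (c : ℝ) : pd s (fun _ => c) u = 0 := by
  simp [pd]

lemma pd_apply (i : Fin n) : pd s (fun v => v i) u = (Pi.single s 1 : Fin n → ℝ) i := by
  rw [pd, (hasFDerivAt_apply i u).fderiv]
  rfl

variable {s u} {f g : (Fin n → ℝ) → ℝ}

lemma pd_neg : pd s (fun v => -f v) u = -pd s f u := by
  simp [pd, fderiv_fun_neg]

lemma pd_const_mul (c : ℝ) : pd s (fun v => c * f v) u = c * pd s f u := by
  rw [pd, show (fun v => c * f v) = c • f from rfl, fderiv_const_smul_field]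
  rfl

lemma pd_mul (hf : DifferentiableAt ℝ f u) (hg : DifferentiableAt ℝ g u) :
    pd s (fun v => f v * g v) u = f u * pd s g u + g u * pd s f u := by
  simp [pd, fderiv_fun_mul hf hg]

end pd

lemma pd_VKdV (s i j : Fin 3) (u : Fin 3 → ℝ) : pd s (fun v => VKdV v i j) u = 0 :=
  pd_const s u (VKdV 0 i j)

lemma pd_gKdVdeg (s i j : Fin 3) (u : Fin 3 → ℝ) : pd s (fun v => gKdVdeg v i j) u = 0 :=
  pd_const s u (gKdVdeg 0 i j)

lemma pd_WKdV (s j : Fin 3) (u : Fin 3 → ℝ) :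
    pd s (fun v => WKdV v j) u = !![0, 1, 0; 0, 0, 1; 6 * u 1, 6 * u 0, 0] j s := by
  fin_cases j <;> fin_cases s <;>
    simp (disch := fun_prop) [WKdV, pd_apply, pd_const_mul, pd_mul, Pi.single_apply, mul_comm]

lemma pd_ωKdVdeg (s i j : Fin 3) (u : Fin 3 → ℝ) :
    pd s (fun v => ωKdVdeg v i j) u
      = (Pi.single s 1 : Fin 3 → ℝ) 0 * !![0, 0, 0; 0, 0, 6; 0, -6, 0] i j := by
  fin_cases i <;> fin_cases j <;>
    simp [ωKdVdeg, pd_const, pd_neg, pd_const_mul, pd_apply, mul_comm]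

lemma kdvDeg_Vg_symm (u : Fin 3 → ℝ) (i j : Fin 3) :
    ∑ s, VKdV u i s * gKdVdeg u s j = ∑ s, VKdV u j s * gKdVdeg u s i := by
  fin_cases i <;> fin_cases j <;> simp [Fin.sum_univ_three, VKdV, gKdVdeg]

lemma kdvDeg_cond_Vgb (u : Fin 3 → ℝ) (i j k : Fin 3) :
    ∑ s, (gKdVdeg u i s * (pd k (fun v => VKdV v j s) u - pd s (fun v => VKdV v j k) u)
        + bKdVdeg u i j s * VKdV u s k - bKdVdeg u s j k * VKdV u i s) = 0 := by
  simp [pd_VKdV, bKdVdeg]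

lemma kdvDeg_cond_gWω (u : Fin 3 → ℝ) (i j : Fin 3) :
    ∑ s, (pd s (fun v => gKdVdeg v i j) u * WKdV u s
        - gKdVdeg u j s * pd s (fun v => WKdV v i) u
        - gKdVdeg u i s * pd s (fun v => WKdV v j) u
        - ωKdVdeg u s i * VKdV u j s - ωKdVdeg u s j * VKdV u i s) = 0 := by
  simp only [pd_gKdVdeg, pd_WKdV]
  fin_cases i <;> fin_cases j <;> simp [Fin.sum_univ_three, gKdVdeg, ωKdVdeg, VKdV]

lemma kdvDeg_cond_Wω (u : Fin 3 → ℝ) (i j : Fin 3) :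
    ∑ s, (pd s (fun v => WKdV v i) u * ωKdVdeg u s j
        + pd s (fun v => WKdV v j) u * ωKdVdeg u i s
        + pd s (fun v => ωKdVdeg v j i) u * WKdV u s) = 0 := by
  simp only [pd_WKdV, pd_ωKdVdeg]
  fin_cases i <;> fin_cases j <;> simp [Fin.sum_univ_three, ωKdVdeg, WKdV]

lemma kdvDeg_cond_T (u : Fin 3 → ℝ) (i j k : Fin 3) :
    (- ∑ l, gKdVdeg u i l * pd k (fun v => pd l (fun w => WKdV w j) v) u)
    + (∑ l, pd l (fun v => bKdVdeg v i j k) u * WKdV u l)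
    + (∑ l, bKdVdeg u i j l * pd k (fun v => WKdV v l) u)
    - (∑ l, bKdVdeg u i l k * pd l (fun v => WKdV v j) u)
    - (∑ l, bKdVdeg u l j k * pd l (fun v => WKdV v i) u)
    - (∑ s, pd s (fun v => VKdV v i k) u * ωKdVdeg u s j)
    + (∑ s, ωKdVdeg u i s * (pd k (fun v => VKdV v j s) u - pd s (fun v => VKdV v j k) u))
    + (∑ s, pd s (fun v => ωKdVdeg v i j) u * VKdV u s k)
    - (∑ s, pd k (fun v => ωKdVdeg v s j) u * VKdV u i s) = 0 := by
  simp only [pd_VKdV, pd_WKdV, pd_ωKdVdeg, bKdVdeg]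
  fin_cases i <;> fin_cases j <;> fin_cases k <;>
    simp [Fin.sum_univ_three, gKdVdeg, VKdV, pd_const, Pi.single_apply]

/-- The KdV system, written as a non-homogeneous first-order quasilinear system,
satisfies all five compatibility conditions with the degenerate non-homogeneous
operator of type `1+0`. -/
theorem kdv_degenerate_compatibility :
    -- (1) V^i_s g^{sj} = V^j_s g^{si}
    (∀ u : Fin 3 → ℝ, ∀ i j : Fin 3,
      ∑ s, VKdV u i s * gKdVdeg u s j = ∑ s, VKdV u j s * gKdVdeg u s i)
    ∧
    -- (2) g^{is}(V^j_{s,k} − V^j_{k,s}) + b^{ij}_s V^s_k − b^{sj}_k V^i_s = 0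
    (∀ u : Fin 3 → ℝ, ∀ i j k : Fin 3,
      ∑ s, (gKdVdeg u i s * (pd k (fun v => VKdV v j s) u - pd s (fun v => VKdV v j k) u)
          + bKdVdeg u i j s * VKdV u s k - bKdVdeg u s j k * VKdV u i s) = 0)
    ∧
    -- (3) g^{ij}_{,s} W^s − g^{js} W^i_{,s} − g^{is} W^j_{,s} − ω^{si} V^j_s − ω^{sj} V^i_s = 0
    (∀ u : Fin 3 → ℝ, ∀ i j : Fin 3,
      ∑ s, (pd s (fun v => gKdVdeg v i j) u * WKdV u s
          - gKdVdeg u j s * pd s (fun v => WKdV v i) u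
          - gKdVdeg u i s * pd s (fun v => WKdV v j) u
          - ωKdVdeg u s i * VKdV u j s - ωKdVdeg u s j * VKdV u i s) = 0)
    ∧
    -- (4) W^i_{,s} ω^{sj} + W^j_{,s} ω^{is} + ω^{ji}_{,s} W^s = 0
    (∀ u : Fin 3 → ℝ, ∀ i j : Fin 3,
      ∑ s, (pd s (fun v => WKdV v i) u * ωKdVdeg u s j
          + pd s (fun v => WKdV v j) u * ωKdVdeg u i s
          + pd s (fun v => ωKdVdeg v j i) u * WKdV u s) = 0)
    ∧
    -- (5) T^{ij}_k = 0
    (∀ u : Fin 3 → ℝ, ∀ i j k : Fin 3,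
      (- ∑ l, gKdVdeg u i l * pd k (fun v => pd l (fun w => WKdV w j) v) u)
      + (∑ l, pd l (fun v => bKdVdeg v i j k) u * WKdV u l)
      + (∑ l, bKdVdeg u i j l * pd k (fun v => WKdV v l) u)
      - (∑ l, bKdVdeg u i l k * pd l (fun v => WKdV v j) u)
      - (∑ l, bKdVdeg u l j k * pd l (fun v => WKdV v i) u)
      - (∑ s, pd s (fun v => VKdV v i k) u * ωKdVdeg u s j)
      + (∑ s, ωKdVdeg u i s * (pd k (fun v => VKdV v j s) u - pd s (fun v => VKdV v j k) u))
      + (∑ s, pd s (fun v => ωKdVdeg v i j) u * VKdV u s k)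
      - (∑ s, pd k (fun v => ωKdVdeg v s j) u * VKdV u i s) = 0) :=
  ⟨kdvDeg_Vg_symm, kdvDeg_cond_Vgb, kdvDeg_cond_gWω, kdvDeg_cond_Wω, kdvDeg_cond_T⟩
end

section
/- Let g^{ij}(u), b^{ij}_k(u), V^i_j(u) satisfy the Hamiltonianity conditions: g^{ij} = g^{ji}, g^{ij}_{,k} = b^{ij}_k + b^{ji}_k, g^{is} b^{jk}_s = g^{js} b^{ik}_s, and g^{is}(b^{jr}_{s,k} − b^{jr}_{k,s}) + b^{ij}_s b^{sr}_k − b^{ir}_s b^{sj}_k = 0, together with the compatibility conditions g^{is} V^j_s = g^{js} V^i_s and g^{is}(V^j_{s,k} − V^j_{k,s}) + b^{ij}_s V^s_k − b^{sj}_k V^i_s = 0. Then for all a, b, i, j: g^{am} g^{bl} [ (b^{ij}_{m,k} − b^{ij}_{k,m}) V^k_l + (b^{ij}_{l,k} − b^{ij}_{k,l}) V^k_m + b^{kj}_l (V^i_{k,m} − V^i_{m,k}) + b^{ki}_l (V^j_{m,k} − V^j_{k,m}) + b^{kj}_m (V^i_{k,l} − V^i_{l,k}) + b^{ki}_m (V^j_{l,k}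 − V^j_{k,l}) ] = 0. -/
open scoped BigOperators

section helpers
variable {n : ℕ}

lemma ptw3 {f g : Fin n → Fin n → Fin n → ℝ} (h : ∀ x y z, f x y z = g x y z) :
    (∑ x, ∑ y, ∑ z, f x y z) = ∑ x, ∑ y, ∑ z, g x y z :=
  Finset.sum_congr rfl fun x _ => Finset.sum_congr rfl fun y _ =>
    Finset.sum_congr rfl fun z _ => h x y z

lemma rot3 (f : Fin n → Fin n → Fin n → ℝ) :
    (∑ x, ∑ y, ∑ z, f x y z) = ∑ y, ∑ z, ∑ x, f x y z := by
  rw [Finset.sum_comm]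
  exact Finset.sum_congr rfl fun y _ => Finset.sum_comm

lemma swap23 (f : Fin n → Fin n → Fin n → ℝ) :
    (∑ x, ∑ y, ∑ z, f x y z) = ∑ x, ∑ z, ∑ y, f x y z :=
  Finset.sum_congr rfl fun _ _ => Finset.sum_comm

lemma ctr3 {X Y : Fin n → Fin n → Fin n → ℝ} (C : Fin n → Fin n → ℝ)
    (h : ∀ x y, (∑ z, X x y z) = ∑ z, Y x y z) :
    (∑ x, ∑ y, ∑ z, X x y z * C x y) = ∑ x, ∑ y, ∑ z, Y x y z * C x y :=
  Finset.sum_congr rfl fun x _ => Finset.sum_congr rfl fun y _ => by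
    rw [← Finset.sum_mul, ← Finset.sum_mul, h x y]

lemma sum_eq_of_sub {f g : Fin n → ℝ} (h : (∑ s, (f s - g s)) = 0) :
    (∑ s, f s) = ∑ s, g s := by
  rw [Finset.sum_sub_distrib] at h; linarith

lemma chainA (G W : Fin n → Fin n → ℝ) (B : Fin n → Fin n → Fin n → ℝ)
    (gs : ∀ p q, G p q = G q p)
    (b2 : ∀ p q r, (∑ s, G p s * B q r s) = ∑ s, G q s * B p r s)
    (c0 : ∀ p q, (∑ s, G p s * W q s) = ∑ s, G q s * W p s)
    (a c i j : Fin n) :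
    (∑ l, ∑ k, ∑ s, (G c l * W k l) * (B a i s * B s j k))
      = ∑ p, ∑ q, ∑ r, G a p * B q i p * B r j q * W c r := by
  calc (∑ l, ∑ k, ∑ s, (G c l * W k l) * (B a i s * B s j k))
      = ∑ k, ∑ s, ∑ l, (G c l * W k l) * (B a i s * B s j k) := rot3 _
    _ = ∑ k, ∑ s, ∑ l, (G k l * W c l) * (B a i s * B s j k) :=
        ctr3 _ (fun k _ => c0 c k)
    _ = ∑ s, ∑ l, ∑ k, (G k l * W c l) * (B a i s * B s j k) := rot3 _
    _ = ∑ s, ∑ l, ∑ k, (G l k * B s j k) * (W c l * B a i s) :=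
        ptw3 fun s l k => by rw [gs k l]; ring
    _ = ∑ s, ∑ l, ∑ k, (G s k * B l j k) * (W c l * B a i s) :=
        ctr3 _ (fun _ l => b2 l _ j)
    _ = ∑ l, ∑ k, ∑ s, (G s k * B l j k) * (W c l * B a i s) := rot3 _
    _ = ∑ l, ∑ k, ∑ s, (G k s * B a i s) * (B l j k * W c l) :=
        ptw3 fun l k s => by rw [gs s k]; ring
    _ = ∑ l, ∑ k, ∑ s, (G a s * B k i s) * (B l j k * W c l) :=
        ctr3 _ (fun _ k => b2 k a i)
    _ = ∑ k, ∑ s, ∑ l, (G a s * B k i s) * (B l j k * W c l) := rot3 _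
    _ = ∑ s, ∑ l, ∑ k, (G a s * B k i s) * (B l j k * W c l) := rot3 _
    _ = ∑ s, ∑ k, ∑ l, (G a s * B k i s) * (B l j k * W c l) := swap23 _
    _ = ∑ p, ∑ q, ∑ r, G a p * B q i p * B r j q * W c r := ptw3 fun p q r => by ring

lemma chainB (G W : Fin n → Fin n → ℝ) (B : Fin n → Fin n → Fin n → ℝ)
    (gs : ∀ p q, G p q = G q p)
    (b2 : ∀ p q r, (∑ s, G p s * B q r s) = ∑ s, G q s * B p r s)
    (c0 : ∀ p q, (∑ s, G p s * W q s) = ∑ s, G q s * W p s)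
    (a c i j : Fin n) :
    (∑ l, ∑ k, ∑ s, (G c l * B k j l) * (B a i s * W s k))
      = ∑ p, ∑ q, ∑ r, G a p * B q i p * B c j r * W r q := by
  calc (∑ l, ∑ k, ∑ s, (G c l * B k j l) * (B a i s * W s k))
      = ∑ k, ∑ s, ∑ l, (G c l * B k j l) * (B a i s * W s k) := rot3 _
    _ = ∑ k, ∑ s, ∑ l, (G k l * B c j l) * (B a i s * W s k) :=
        ctr3 _ (fun k _ => b2 c k j)
    _ = ∑ s, ∑ l, ∑ k, (G k l * B c j l) * (B a i s * W s k) := rot3 _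
    _ = ∑ s, ∑ l, ∑ k, (G l k * W s k) * (B c j l * B a i s) :=
        ptw3 fun s l k => by rw [gs k l]; ring
    _ = ∑ s, ∑ l, ∑ k, (G s k * W l k) * (B c j l * B a i s) :=
        ctr3 _ (fun _ l => c0 l _)
    _ = ∑ l, ∑ k, ∑ s, (G s k * W l k) * (B c j l * B a i s) := rot3 _
    _ = ∑ l, ∑ k, ∑ s, (G k s * B a i s) * (W l k * B c j l) :=
        ptw3 fun l k s => by rw [gs s k]; ring
    _ = ∑ l, ∑ k, ∑ s, (G a s * B k i s) * (W l k * B c j l) :=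
        ctr3 _ (fun _ k => b2 k a i)
    _ = ∑ k, ∑ s, ∑ l, (G a s * B k i s) * (W l k * B c j l) := rot3 _
    _ = ∑ s, ∑ l, ∑ k, (G a s * B k i s) * (W l k * B c j l) := rot3 _
    _ = ∑ s, ∑ k, ∑ l, (G a s * B k i s) * (W l k * B c j l) := swap23 _
    _ = ∑ p, ∑ q, ∑ r, G a p * B q i p * B c j r * W r q := ptw3 fun p q r => by ring

lemma chainC (G W : Fin n → Fin n → ℝ) (B : Fin n → Fin n → Fin n → ℝ)
    (gs : ∀ p q, G p q = G q p)
    (b2 : ∀ p q r, (∑ s, G p s * B q r s) = ∑ s, G q s * B p r s)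
    (c0 : ∀ p q, (∑ s, G p s * W q s) = ∑ s, G q s * W p s)
    (a c i j : Fin n) :
    (∑ l, ∑ k, ∑ s, (G c l * B k j l) * (B s i k * W a s))
      = ∑ p, ∑ q, ∑ r, G a p * W q p * B r i q * B c j r := by
  calc (∑ l, ∑ k, ∑ s, (G c l * B k j l) * (B s i k * W a s))
      = ∑ k, ∑ s, ∑ l, (G c l * B k j l) * (B s i k * W a s) := rot3 _
    _ = ∑ k, ∑ s, ∑ l, (G k l * B c j l) * (B s i k * W a s) :=
        ctr3 _ (fun k _ => b2 c k j)
    _ = ∑ s, ∑ l, ∑ k, (G k l * B c j l) * (B s i k * W a s) := rot3 _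
    _ = ∑ s, ∑ l, ∑ k, (G l k * B s i k) * (B c j l * W a s) :=
        ptw3 fun s l k => by rw [gs k l]; ring
    _ = ∑ s, ∑ l, ∑ k, (G s k * B l i k) * (B c j l * W a s) :=
        ctr3 _ (fun s l => b2 l s i)
    _ = ∑ l, ∑ k, ∑ s, (G s k * B l i k) * (B c j l * W a s) := rot3 _
    _ = ∑ l, ∑ k, ∑ s, (G k s * W a s) * (B l i k * B c j l) :=
        ptw3 fun l k s => by rw [gs s k]; ring
    _ = ∑ l, ∑ k, ∑ s, (G a s * W k s) * (B l i k * B c j l) :=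
        ctr3 _ (fun _ k => c0 k a)
    _ = ∑ k, ∑ s, ∑ l, (G a s * W k s) * (B l i k * B c j l) := rot3 _
    _ = ∑ s, ∑ l, ∑ k, (G a s * W k s) * (B l i k * B c j l) := rot3 _
    _ = ∑ s, ∑ k, ∑ l, (G a s * W k s) * (B l i k * B c j l) := swap23 _
    _ = ∑ p, ∑ q, ∑ r, G a p * W q p * B r i q * B c j r := ptw3 fun p q r => by ring

end helpers

/-- The key computation in the proof that the second-order compatibility condition
(eq. 201) is a differential consequence of the lower-order ones, valid also for
degenerate `g`. -/
theorem eq201_key_computation {n : ℕ} (U : Set (Fin n → ℝ)) (hU : IsOpen U)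
    (g : (Fin n → ℝ) → Fin n → Fin n → ℝ)
    (b : (Fin n → ℝ) → Fin n → Fin n → Fin n → ℝ)
    (V : (Fin n → ℝ) → Fin n → Fin n → ℝ)
    (hg : ∀ i j, ContDiffOn ℝ (⊤ : ℕ∞) (fun u => g u i j) U)
    (hb : ∀ i j k, ContDiffOn ℝ (⊤ : ℕ∞) (fun u => b u i j k) U)
    (hV : ∀ i j, ContDiffOn ℝ (⊤ : ℕ∞) (fun u => V u i j) U)
    -- Hamiltonianity conditions
    (hgsym : ∀ u ∈ U, ∀ i j, g u i j = g u j i)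
    (hgb : ∀ u ∈ U, ∀ i j k : Fin n, pd k (fun v => g v i j) u = b u i j k + b u j i k)
    (hgb2 : ∀ u ∈ U, ∀ i j k : Fin n, ∑ s, g u i s * b u j k s = ∑ s, g u j s * b u i k s)
    (hcurv : ∀ u ∈ U, ∀ i j r k : Fin n,
      ∑ s, (g u i s * (pd k (fun v => b v j r s) u - pd s (fun v => b v j r k) u)
          + b u i j s * b u s r k - b u i r s * b u s j k) = 0)
    -- compatibility conditions
    (hcomp0 : ∀ u ∈ U, ∀ i j : Fin n, ∑ s, g u i s * V u j s = ∑ s, g u j s * V u i s)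
    (hcomp1 : ∀ u ∈ U, ∀ i j k : Fin n,
      ∑ s, (g u i s * (pd k (fun v => V v j s) u - pd s (fun v => V v j k) u)
          + b u i j s * V u s k - b u s j k * V u i s) = 0) :
    ∀ u ∈ U, ∀ a c i j : Fin n,
      ∑ m, ∑ l, (g u a m * g u c l *
        (∑ k, ((pd k (fun v => b v i j m) u - pd m (fun v => b v i j k) u) * V u k l
             + (pd k (fun v => b v i j l) u - pd l (fun v => b v i j k) u) * V u k m
             + b u k j l * (pd m (fun v => V v i k) u - pd k (fun v => V v i m) u)
             + b u k i l * (pd k (fun v => V v j m) u - pd m (fun v => V v j k) u)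
             + b u k j m * (pd l (fun v => V v i k) u - pd k (fun v => V v i l) u)
             + b u k i m * (pd k (fun v => V v j l) u - pd l (fun v => V v j k) u)))) = 0 := by
  intro u hu a c i j
  have gs : ∀ p q, g u p q = g u q p := hgsym u hu
  have b2 : ∀ p q r, (∑ s, g u p s * b u q r s) = ∑ s, g u q s * b u p r s := hgb2 u hu
  have c0 : ∀ p q, (∑ s, g u p s * V u q s) = ∑ s, g u q s * V u p s := hcomp0 u hu
  have F1 : ∀ p k : Fin n,
      (∑ s, g u p s * (pd k (fun v => b v i j s) u - pd s (fun v => b v i j k) u))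
        = ∑ s, (b u p j s * b u s i k - b u p i s * b u s j k) := fun p k =>
    sum_eq_of_sub (by
      rw [← hcurv u hu p i j k]
      exact Finset.sum_congr rfl fun s _ => by ring)
  have F2 : ∀ p q k : Fin n,
      (∑ s, g u p s * (pd k (fun v => V v q s) u - pd s (fun v => V v q k) u))
        = ∑ s, (b u s q k * V u p s - b u p q s * V u s k) := fun p q k =>
    sum_eq_of_sub (by
      rw [← hcomp1 u hu p q k]
      exact Finset.sum_congr rfl fun s _ => by ring)
  have F2n : ∀ p q k : Fin n,
      (∑ s, g u p s * (pd s (fun v => V v q k) u - pd k (fun v => V v q s) u))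
        = ∑ s, (b u p q s * V u s k - b u s q k * V u p s) := fun p q k =>
    sum_eq_of_sub (by
      rw [← neg_eq_zero, ← Finset.sum_neg_distrib, ← hcomp1 u hu p q k]
      exact Finset.sum_congr rfl fun s _ => by ring)
  have step1 : (∑ m, ∑ l, (g u a m * g u c l *
        (∑ k, ((pd k (fun v => b v i j m) u - pd m (fun v => b v i j k) u) * V u k l
             + (pd k (fun v => b v i j l) u - pd l (fun v => b v i j k) u) * V u k m
             + b u k j l * (pd m (fun v => V v i k) u - pd k (fun v => V v i m) u)
             + b u k i l * (pd k (fun v => V v j m) u - pd m (fun v => V v j k) u)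
             + b u k j m * (pd l (fun v => V v i k) u - pd k (fun v => V v i l) u)
             + b u k i m * (pd k (fun v => V v j l) u - pd l (fun v => V v j k) u)))))
      = ∑ m, ∑ l, ∑ k,
        ((g u a m * (pd k (fun v => b v i j m) u - pd m (fun v => b v i j k) u)) * (g u c l * V u k l)
       + (g u c l * (pd k (fun v => b v i j l) u - pd l (fun v => b v i j k) u)) * (g u a m * V u k m)
       + (g u a m * (pd m (fun v => V v i k) u - pd k (fun v => V v i m) u)) * (g u c l * b u k j l)
       + (g u a m * (pd k (fun v => V v j m) u - pd m (fun v => V v j k) u)) * (g u c l * b u k i l)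
       + (g u c l * (pd l (fun v => V v i k) u - pd k (fun v => V v i l) u)) * (g u a m * b u k j m)
       + (g u c l * (pd k (fun v => V v j l) u - pd l (fun v => V v j k) u)) * (g u a m * b u k i m)) :=
    Finset.sum_congr rfl fun m _ => Finset.sum_congr rfl fun l _ => by
      rw [Finset.mul_sum]; exact Finset.sum_congr rfl fun k _ => by ring
  rw [step1]
  simp only [Finset.sum_add_distrib]
  -- six pieces
  have hS1 : (∑ m, ∑ l, ∑ k,
        (g u a m * (pd k (fun v => b v i j m) u - pd m (fun v => b v i j k) u)) * (g u c l * V u k l))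
      = (∑ p, ∑ q, ∑ r, g u a p * b u q j p * b u r i q * V u c r)
        - ∑ p, ∑ q, ∑ r, g u a p * b u q i p * b u r j q * V u c r := by
    calc (∑ m, ∑ l, ∑ k,
        (g u a m * (pd k (fun v => b v i j m) u - pd m (fun v => b v i j k) u)) * (g u c l * V u k l))
        = ∑ l, ∑ k, ∑ m,
          (g u a m * (pd k (fun v => b v i j m) u - pd m (fun v => b v i j k) u)) * (g u c l * V u k l) := rot3 _
      _ = ∑ l, ∑ k, ∑ m,
          (b u a j m * b u m i k - b u a i m * b u m j k) * (g u c l * V u k l) :=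
          ctr3 _ (fun _ k => F1 a k)
      _ = ∑ l, ∑ k, ∑ m,
          ((g u c l * V u k l) * (b u a j m * b u m i k)
            - (g u c l * V u k l) * (b u a i m * b u m j k)) :=
          ptw3 fun l k m => by ring
      _ = (∑ l, ∑ k, ∑ m, (g u c l * V u k l) * (b u a j m * b u m i k))
            - ∑ l, ∑ k, ∑ m, (g u c l * V u k l) * (b u a i m * b u m j k) := by
          simp only [Finset.sum_sub_distrib]
      _ = (∑ p, ∑ q, ∑ r, g u a p * b u q j p * b u r i q * V u c r)
            - ∑ p, ∑ q, ∑ r, g u a p * b u q i p * b u r j q * V u c r := by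
          rw [chainA (g u) (V u) (b u) gs b2 c0 a c j i,
              chainA (g u) (V u) (b u) gs b2 c0 a c i j]
  have hS2 : (∑ m, ∑ l, ∑ k,
        (g u c l * (pd k (fun v => b v i j l) u - pd l (fun v => b v i j k) u)) * (g u a m * V u k m))
      = ∑ p, ∑ q, ∑ r, (g u a p * V u q p * (b u c j r * b u r i q - b u c i r * b u r j q)) := by
    calc (∑ m, ∑ l, ∑ k,
        (g u c l * (pd k (fun v => b v i j l) u - pd l (fun v => b v i j k) u)) * (g u a m * V u k m))
        = ∑ m, ∑ k, ∑ l,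
          (g u c l * (pd k (fun v => b v i j l) u - pd l (fun v => b v i j k) u)) * (g u a m * V u k m) := swap23 _
      _ = ∑ m, ∑ k, ∑ l,
          (b u c j l * b u l i k - b u c i l * b u l j k) * (g u a m * V u k m) :=
          ctr3 _ (fun _ k => F1 c k)
      _ = ∑ p, ∑ q, ∑ r, (g u a p * V u q p * (b u c j r * b u r i q - b u c i r * b u r j q)) :=
          ptw3 fun p q r => by ring
  have hS3 : (∑ m, ∑ l, ∑ k,
        (g u a m * (pd m (fun v => V v i k) u - pd k (fun v => V v i m) u)) * (g u c l * b u k j l))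
      = (∑ p, ∑ q, ∑ r, g u a p * b u q i p * b u c j r * V u r q)
        - ∑ p, ∑ q, ∑ r, g u a p * V u q p * b u r i q * b u c j r := by
    calc (∑ m, ∑ l, ∑ k,
        (g u a m * (pd m (fun v => V v i k) u - pd k (fun v => V v i m) u)) * (g u c l * b u k j l))
        = ∑ l, ∑ k, ∑ m,
          (g u a m * (pd m (fun v => V v i k) u - pd k (fun v => V v i m) u)) * (g u c l * b u k j l) := rot3 _
      _ = ∑ l, ∑ k, ∑ m,
          (b u a i m * V u m k - b u m i k * V u a m) * (g u c l * b u k j l) :=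
          ctr3 _ (fun _ k => F2n a i k)
      _ = ∑ l, ∑ k, ∑ m,
          ((g u c l * b u k j l) * (b u a i m * V u m k)
            - (g u c l * b u k j l) * (b u m i k * V u a m)) :=
          ptw3 fun l k m => by ring
      _ = (∑ l, ∑ k, ∑ m, (g u c l * b u k j l) * (b u a i m * V u m k))
            - ∑ l, ∑ k, ∑ m, (g u c l * b u k j l) * (b u m i k * V u a m) := by
          simp only [Finset.sum_sub_distrib]
      _ = (∑ p, ∑ q, ∑ r, g u a p * b u q i p * b u c j r * V u r q)
            - ∑ p, ∑ q, ∑ r, g u a p * V u q p * b u r i q * b u c j r := by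
          rw [chainB (g u) (V u) (b u) gs b2 c0 a c i j,
              chainC (g u) (V u) (b u) gs b2 c0 a c i j]
  have hS4 : (∑ m, ∑ l, ∑ k,
        (g u a m * (pd k (fun v => V v j m) u - pd m (fun v => V v j k) u)) * (g u c l * b u k i l))
      = (∑ p, ∑ q, ∑ r, g u a p * V u q p * b u r j q * b u c i r)
        - ∑ p, ∑ q, ∑ r, g u a p * b u q j p * b u c i r * V u r q := by
    calc (∑ m, ∑ l, ∑ k,
        (g u a m * (pd k (fun v => V v j m) u - pd m (fun v => V v j k) u)) * (g u c l * b u k i l))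
        = ∑ l, ∑ k, ∑ m,
          (g u a m * (pd k (fun v => V v j m) u - pd m (fun v => V v j k) u)) * (g u c l * b u k i l) := rot3 _
      _ = ∑ l, ∑ k, ∑ m,
          (b u m j k * V u a m - b u a j m * V u m k) * (g u c l * b u k i l) :=
          ctr3 _ (fun _ k => F2 a j k)
      _ = ∑ l, ∑ k, ∑ m,
          ((g u c l * b u k i l) * (b u m j k * V u a m)
            - (g u c l * b u k i l) * (b u a j m * V u m k)) :=
          ptw3 fun l k m => by ring
      _ = (∑ l, ∑ k, ∑ m, (g u c l * b u k i l) * (b u m j k * V u a m))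
            - ∑ l, ∑ k, ∑ m, (g u c l * b u k i l) * (b u a j m * V u m k) := by
          simp only [Finset.sum_sub_distrib]
      _ = (∑ p, ∑ q, ∑ r, g u a p * V u q p * b u r j q * b u c i r)
            - ∑ p, ∑ q, ∑ r, g u a p * b u q j p * b u c i r * V u r q := by
          rw [chainC (g u) (V u) (b u) gs b2 c0 a c j i,
              chainB (g u) (V u) (b u) gs b2 c0 a c j i]
  have hS5 : (∑ m, ∑ l, ∑ k,
        (g u c l * (pd l (fun v => V v i k) u - pd k (fun v => V v i l) u)) * (g u a m * b u k j m))
      = ∑ p, ∑ q, ∑ r, (g u a p * b u q j p * (b u c i r * V u r q - b u r i q * V u c r)) := by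
    calc (∑ m, ∑ l, ∑ k,
        (g u c l * (pd l (fun v => V v i k) u - pd k (fun v => V v i l) u)) * (g u a m * b u k j m))
        = ∑ m, ∑ k, ∑ l,
          (g u c l * (pd l (fun v => V v i k) u - pd k (fun v => V v i l) u)) * (g u a m * b u k j m) := swap23 _
      _ = ∑ m, ∑ k, ∑ l,
          (b u c i l * V u l k - b u l i k * V u c l) * (g u a m * b u k j m) :=
          ctr3 _ (fun _ k => F2n c i k)
      _ = ∑ p, ∑ q, ∑ r, (g u a p * b u q j p * (b u c i r * V u r q - b u r i q * V u c r)) :=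
          ptw3 fun p q r => by ring
  have hS6 : (∑ m, ∑ l, ∑ k,
        (g u c l * (pd k (fun v => V v j l) u - pd l (fun v => V v j k) u)) * (g u a m * b u k i m))
      = ∑ p, ∑ q, ∑ r, (g u a p * b u q i p * (b u r j q * V u c r - b u c j r * V u r q)) := by
    calc (∑ m, ∑ l, ∑ k,
        (g u c l * (pd k (fun v => V v j l) u - pd l (fun v => V v j k) u)) * (g u a m * b u k i m))
        = ∑ m, ∑ k, ∑ l,
          (g u c l * (pd k (fun v => V v j l) u - pd l (fun v => V v j k) u)) * (g u a m * b u k i m) := swap23 _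
      _ = ∑ m, ∑ k, ∑ l,
          (b u l j k * V u c l - b u c j l * V u l k) * (g u a m * b u k i m) :=
          ctr3 _ (fun _ k => F2 c j k)
      _ = ∑ p, ∑ q, ∑ r, (g u a p * b u q i p * (b u r j q * V u c r - b u c j r * V u r q)) :=
          ptw3 fun p q r => by ring
  rw [hS1, hS2, hS3, hS4, hS5, hS6]
  simp only [← Finset.sum_sub_distrib, ← Finset.sum_add_distrib]
  exact Finset.sum_eq_zero fun p _ => Finset.sum_eq_zero fun q _ =>
    Finset.sum_eq_zero fun r _ => by ring
end
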